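/- arXiv:2209.01429 — 3 statements merged into one kernel-verified Lean document; each statement's English description precedes it below -/
import Mathlib

section
/- Suppose the censoring variable C is independent of (Z, W, U), T is a function of (Z, U), Y = min(T, C), δ = 1{T ≤ C}, and G(s) = P(C ≥ s). Let β ∈ ℝ^K be such that exp(z⊤β) < c̄ for all z ∈ 𝒵, where c̄ is the upper bound of the support of C (so G(Y) > 0 on the event {Y ≤ exp(Z⊤β)}). Then E[(δ/G(Y)) · 1{Y ≤ exp(Z⊤β)} | W = w] = E[1{T ≤ exp(Z⊤β)} | W = w] for all w in the support of W. -/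
/-!
Inverse probability of censoring weighting. On `{T ≤ C}` we have `Y = T` and `δ = 1`, so the
weighted indicator equals `1{T ≤ C} · 1{T ≤ exp(Z⊤β)} / G(T)`. Since `C` is independent of
`V = (Z, W, U)` and `T` is a function of `V`, integrating out `C` replaces `1{T ≤ C}` by
`P(C ≥ T | V) = G(T)`, which is positive wherever `T ≤ exp(Z⊤β) < c̄`. Hence both integrands have
the same integral over every event `{W ∈ A}`, which characterises their conditional expectations
given `W`.
-/

open MeasureTheory ProbabilityTheory Set

open scoped ENNReal

theorem condExp_ae_eq_condExp_of_forall_setLIntegral_eq {Ω : Type*} {m m₀ : MeasurableSpace Ω}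
    {μ : Measure[m₀] Ω} [IsFiniteMeasure μ] (hm : m ≤ m₀) {f g : Ω → ℝ}
    (hf : AEStronglyMeasurable[m₀] f μ) (hf0 : 0 ≤ f) (hg : Integrable g μ) (hg0 : 0 ≤ g)
    (hfg : ∀ s, MeasurableSet[m] s →
      ∫⁻ ω in s, ENNReal.ofReal (f ω) ∂μ = ∫⁻ ω in s, ENNReal.ofReal (g ω) ∂μ) :
    μ[f | m] =ᵐ[μ] μ[g | m] := by
  have hfint : Integrable f μ := by
    rw [← lintegral_ofReal_ne_top_iff_integrable hf (ae_of_all _ hf0), ← setLIntegral_univ, hfg univ MeasurableSet.univ, setLIntegral_univ]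
    exact (lintegral_ofReal_ne_top_iff_integrable hg.1 (ae_of_all _ hg0)).mpr hg
  have hsetIntegral : ∀ s, MeasurableSet[m] s → ∫ ω in s, f ω ∂μ = ∫ ω in s, g ω ∂μ := by
    intro s hs
    rw [integral_eq_lintegral_of_nonneg_ae (ae_of_all _ hf0) hf.restrict,
      integral_eq_lintegral_of_nonneg_ae (ae_of_all _ hg0) hg.1.restrict, hfg s hs]
  refine (ae_eq_condExp_of_forall_setIntegral_eq hm hfint
    (fun s _ _ => integrable_condExp.integrableOn) (fun s hs _ => ?_)
    stronglyMeasurable_condExp.aestronglyMeasurable).symm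
  rw [setIntegral_condExp hm hg hs, hsetIntegral s hs]

section Censoring

variable {Ω α β : Type*} [MeasurableSpace Ω] [MeasurableSpace α] [MeasurableSpace β]
  {μ : Measure Ω}

theorem measurable_measure_setOf_le (C : Ω → ℝ) : Measurable fun s => μ {ω | s ≤ C ω} :=
  Antitone.measurable fun _ _ hst => measure_mono fun _ hω => hst.trans hω

variable [IsFiniteMeasure μ]

theorem IndepFun.lintegral_comp_eq_lintegral_lintegral_map {X : Ω → α} {Y : Ω → β}
    (hX : Measurable X) (hY : Measurable Y) (hXY : IndepFun X Y μ)
    {g : α × β → ℝ≥0∞} (hg : Measurable g) :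
    ∫⁻ ω, g (X ω, Y ω) ∂μ = ∫⁻ ω, ∫⁻ x, g (x, Y ω) ∂(μ.map X) ∂μ :=
  calc ∫⁻ ω, g (X ω, Y ω) ∂μ = ∫⁻ p, g p ∂(μ.map fun ω => (X ω, Y ω)) :=
        (lintegral_map hg (hX.prodMk hY)).symm
    _ = ∫⁻ p, g p ∂((μ.map X).prod (μ.map Y)) := by
        rw [(indepFun_iff_map_prod_eq_prod_map_map hX.aemeasurable hY.aemeasurable).mp hXY]
    _ = ∫⁻ y, ∫⁻ x, g (x, y) ∂(μ.map X) ∂(μ.map Y) := lintegral_prod_symm g hg.aemeasurable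
    _ = ∫⁻ ω, ∫⁻ x, g (x, Y ω) ∂(μ.map X) ∂μ := lintegral_map hg.lintegral_prod_left' hY

theorem lintegral_ofReal_ite_le_div_measure_le {C : Ω → ℝ} {V : Ω → β}
    (hC : Measurable C) (hV : Measurable V) (hCV : IndepFun C V μ)
    {t φ : β → ℝ} (ht : Measurable t) (hφ : Measurable φ)
    (hpos : ∀ᵐ ω ∂μ, φ (V ω) ≠ 0 → 0 < μ {ω' | t (V ω) ≤ C ω'}) :
    ∫⁻ ω, ENNReal.ofReal ((if t (V ω) ≤ C ω then φ (V ω) else 0) /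
        (μ {ω' | t (V ω) ≤ C ω'}).toReal) ∂μ
      = ∫⁻ ω, ENNReal.ofReal (φ (V ω)) ∂μ := by
  set S : ℝ → ℝ≥0∞ := fun s => μ {ω' | s ≤ C ω'}
  set k : ℝ × β → ℝ≥0∞ := fun p =>
    ENNReal.ofReal ((if t p.2 ≤ p.1 then φ p.2 else 0) / (S (t p.2)).toReal)
  have hk : Measurable k := by
    refine ENNReal.measurable_ofReal.comp (Measurable.div ?_
      ((measurable_measure_setOf_le C).comp (ht.comp measurable_snd)).ennreal_toReal)
    exact Measurable.ite (measurableSet_le (ht.comp measurable_snd) measurable_fst)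
      (hφ.comp measurable_snd) measurable_const
  change ∫⁻ ω, k (C ω, V ω) ∂μ = _
  rw [IndepFun.lintegral_comp_eq_lintegral_lintegral_map hC hV hCV hk]
  refine lintegral_congr_ae (hpos.mono fun ω hω => ?_)
  have hk_indicator : ∀ c, k (c, V ω) = (Ici (t (V ω))).indicator
      (fun _ => ENNReal.ofReal (φ (V ω) / (S (t (V ω))).toReal)) c := by
    intro c
    by_cases h : t (V ω) ≤ c <;> simp [k, h]
  simp_rw [hk_indicator]
  rw [lintegral_indicator measurableSet_Ici, setLIntegral_const,
    Measure.map_apply hC measurableSet_Ici]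
  change ENNReal.ofReal (φ (V ω) / (S (t (V ω))).toReal) * S (t (V ω)) = _
  by_cases hφ0 : φ (V ω) = 0
  · simp [hφ0]
  have hSpos : 0 < (S (t (V ω))).toReal :=
    ENNReal.toReal_pos (hω hφ0).ne' (measure_ne_top _ _)
  calc ENNReal.ofReal (φ (V ω) / (S (t (V ω))).toReal) * S (t (V ω))
      = ENNReal.ofReal (φ (V ω) / (S (t (V ω))).toReal) *
          ENNReal.ofReal (S (t (V ω))).toReal := by
        rw [ENNReal.ofReal_toReal (measure_ne_top _ _)]
    _ = ENNReal.ofReal (φ (V ω)) := by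
        rw [← ENNReal.ofReal_mul' hSpos.le, div_mul_cancel₀ _ hSpos.ne']

theorem setLIntegral_preimage_ofReal_censoringWeight {C : Ω → ℝ} {V : Ω → β}
    (hC : Measurable C) (hV : Measurable V) (hCV : IndepFun C V μ)
    {t a : β → ℝ} (ht : Measurable t) (ha : Measurable a) {B : Set β} (hB : MeasurableSet B)
    (hpos : ∀ ω, t (V ω) ≤ a (V ω) → 0 < μ {ω' | t (V ω) ≤ C ω'}) :
    ∫⁻ ω in V ⁻¹' B, ENNReal.ofReal ((if t (V ω) ≤ C ω then 1 else 0) /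
        (μ {ω' | min (t (V ω)) (C ω) ≤ C ω'}).toReal *
        (if min (t (V ω)) (C ω) ≤ a (V ω) then 1 else 0)) ∂μ
      = ∫⁻ ω in V ⁻¹' B, ENNReal.ofReal (if t (V ω) ≤ a (V ω) then 1 else 0) ∂μ := by
  classical
  rw [← lintegral_indicator (hV hB), ← lintegral_indicator (hV hB)]
  calc _ = ∫⁻ ω, ENNReal.ofReal ((if t (V ω) ≤ C ω then
          (if t (V ω) ≤ a (V ω) ∧ V ω ∈ B then 1 else 0) else 0) /
          (μ {ω' | t (V ω) ≤ C ω'}).toReal) ∂μ := by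
        refine lintegral_congr fun ω => ?_
        by_cases hTC : t (V ω) ≤ C ω
        · simp only [indicator_apply, mem_preimage, min_eq_left hTC]
          by_cases hVB : V ω ∈ B <;> simp [hTC, hVB, div_eq_mul_inv]
        · simp [hTC]
    _ = ∫⁻ ω, ENNReal.ofReal (if t (V ω) ≤ a (V ω) ∧ V ω ∈ B then 1 else 0) ∂μ :=
        lintegral_ofReal_ite_le_div_measure_le (φ := fun v => if t v ≤ a v ∧ v ∈ B then 1 else 0)
          hC hV hCV ht (Measurable.ite ((measurableSet_le ht ha).inter hB :) measurable_const
            measurable_const)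
          (ae_of_all _ fun ω hφ => hpos ω (ite_ne_right_iff.mp hφ).1.1)
    _ = _ := by
        refine lintegral_congr fun ω => ?_
        by_cases hVB : V ω ∈ B <;> simp [hVB]

end Censoring

theorem stmt3_general
    {Ω : Type*} [MeasurableSpace Ω] (μ : Measure Ω) [IsProbabilityMeasure μ]
    {K L : ℕ} (Z : Ω → Fin K → ℝ) (W : Ω → Fin L → ℝ) (U : Ω → ℝ) (C : Ω → ℝ)
    (𝒵 : Set (Fin K → ℝ)) (hZsupp : ∀ ω, Z ω ∈ 𝒵)
    (hZm : Measurable Z) (hWm : Measurable W) (hUm : Measurable U) (hCm : Measurable C)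
    (f : (Fin K → ℝ) × ℝ → ℝ) (hf : Measurable f)
    (T : Ω → ℝ) (hTdef : ∀ ω, T ω = f (Z ω, U ω))
    (hindep : IndepFun C (fun ω => (Z ω, W ω, U ω)) μ)
    (G : ℝ → ℝ) (hG : ∀ s, G s = (μ {ω | s ≤ C ω}).toReal)
    (cbar : ℝ) (hGpos : ∀ t, t < cbar → 0 < μ {ω | t ≤ C ω})
    (β : Fin K → ℝ) (hβ : ∀ z ∈ 𝒵, Real.exp (∑ i, z i * β i) < cbar)
    (Y : Ω → ℝ) (hY : ∀ ω, Y ω = min (T ω) (C ω))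
    (δ : Ω → ℝ) (hδ : ∀ ω, δ ω = if T ω ≤ C ω then 1 else 0) :
    μ[(fun ω => (δ ω / G (Y ω)) *
        (if Y ω ≤ Real.exp (∑ i, Z ω i * β i) then (1:ℝ) else 0)) |
        MeasurableSpace.comap W inferInstance]
      =ᵐ[μ]
    μ[(fun ω => if T ω ≤ Real.exp (∑ i, Z ω i * β i) then (1:ℝ) else 0) |
        MeasurableSpace.comap W inferInstance] := by
  obtain rfl : T = fun ω => f (Z ω, U ω) := funext hTdef
  obtain rfl : G = fun s => (μ {ω | s ≤ C ω}).toReal := funext hG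
  obtain rfl : Y = fun ω => min (f (Z ω, U ω)) (C ω) := funext hY
  obtain rfl : δ = fun ω => if f (Z ω, U ω) ≤ C ω then 1 else 0 := funext hδ
  have hT : Measurable fun ω => f (Z ω, U ω) := hf.comp (hZm.prodMk hUm)
  have hexp : Measurable fun ω => Real.exp (∑ i, Z ω i * β i) := by fun_prop
  refine condExp_ae_eq_condExp_of_forall_setLIntegral_eq hWm.comap_le
    (Measurable.aestronglyMeasurable ?_) (fun ω => by dsimp only; split_ifs <;> positivity)
    ((integrable_const (1:ℝ)).indicator (measurableSet_le hT hexp))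
    (fun ω => by dsimp only; split_ifs <;> positivity) ?_
  · refine Measurable.mul (Measurable.div ?_ ?_) ?_
    · exact Measurable.ite (measurableSet_le hT hCm) measurable_const measurable_const
    · exact (measurable_measure_setOf_le C).ennreal_toReal.comp (hT.min hCm)
    · exact Measurable.ite (measurableSet_le (hT.min hCm) hexp) measurable_const measurable_const
  rintro _ ⟨A, hA, rfl⟩
  exact setLIntegral_preimage_ofReal_censoringWeight (t := fun v => f (v.1, v.2.2))
    (a := fun v => Real.exp (∑ i, v.1 i * β i)) (B := {v | v.2.1 ∈ A}) hCm
    (hZm.prodMk (hWm.prodMk hUm)) hindep (hf.comp (by fun_prop)) (by fun_prop)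
    (measurable_fst.comp measurable_snd hA)
    fun ω hT => hGpos _ (hT.trans_lt (hβ _ (hZsupp ω)))

/-- If `C ⫫ (Z, W, U)`, `T = f(Z,U)`, `Y = min(T,C)`, `δ = 1{T ≤ C}`,
`G(s) = P(C ≥ s)`, and `exp(z⊤β) < c̄` for all `z ∈ 𝒵` where `c̄` bounds the support of `C`
below which `G > 0`, then `E[(δ/G(Y))·1{Y ≤ exp(Z⊤β)} | W] = E[1{T ≤ exp(Z⊤β)} | W]` a.s. -/
theorem stmt3
    {Ω : Type*} [MeasurableSpace Ω] (μ : Measure Ω) [IsProbabilityMeasure μ]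
    {K L : ℕ} (Z : Ω → Fin K → ℝ) (W : Ω → Fin L → ℝ) (U : Ω → ℝ) (C : Ω → ℝ)
    (𝒵 : Set (Fin K → ℝ)) (hZsupp : ∀ ω, Z ω ∈ 𝒵)
    (hZm : Measurable Z) (hWm : Measurable W) (hUm : Measurable U) (hCm : Measurable C)
    (f : (Fin K → ℝ) × ℝ → ℝ) (hf : Measurable f)
    (T : Ω → ℝ) (hTdef : ∀ ω, T ω = f (Z ω, U ω))
    (hTnonneg : ∀ ω, 0 ≤ T ω) (hCnonneg : ∀ ω, 0 ≤ C ω)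
    (hindep : IndepFun C (fun ω => (Z ω, W ω, U ω)) μ)
    (G : ℝ → ℝ) (hG : ∀ s, G s = (μ {ω | s ≤ C ω}).toReal)
    (cbar : ℝ) (hGpos : ∀ t, t < cbar → 0 < μ {ω | t ≤ C ω})
    (hCbdd : ∀ᵐ ω ∂μ, C ω ≤ cbar)
    (β : Fin K → ℝ) (hβ : ∀ z ∈ 𝒵, Real.exp (∑ i, z i * β i) < cbar)
    (Y : Ω → ℝ) (hY : ∀ ω, Y ω = min (T ω) (C ω))
    (δ : Ω → ℝ) (hδ : ∀ ω, δ ω = if T ω ≤ C ω then 1 else 0) :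
    μ[(fun ω => (δ ω / G (Y ω)) *
        (if Y ω ≤ Real.exp (∑ i, Z ω i * β i) then (1:ℝ) else 0)) |
        MeasurableSpace.comap W inferInstance]
      =ᵐ[μ]
    μ[(fun ω => if T ω ≤ Real.exp (∑ i, Z ω i * β i) then (1:ℝ) else 0) |
        MeasurableSpace.comap W inferInstance] :=
  stmt3_general μ Z W U C 𝒵 hZsupp hZm hWm hUm hCm f hf T hTdef hindep G hG cbar hGpos β hβ Y hY δ
    hδ
end

section
/- Let Π : ℒ → ℝ² be continuously differentiable on a compact rectangle ℒ ⊂ ℝ², suppose the Jacobian Π'(t) is continuous, has full rank, and has strictly positive entries for all t ∈ ℒ. Then the equation Π(t) = 0 has at most one solution in ℒ. -/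
open Set Filter Topology Asymptotics

/-!
The first component `f₁` has positive partial derivatives, so by the mean value theorem it is
strictly increasing for the product order, and two points with the same image must be
incomparable: `(x₁, y₂)` and `(x₂, y₁)` with `x₁ < x₂`, `y₁ < y₂`. On the rectangle they span, the
level set of `f₁` through them is the graph of a continuous function `φ` joining them, and `φ` is
differentiable since `∂₂f₁ ≠ 0`. Rolle's theorem for `x ↦ f₂ (x, φ x)` yields a point where `f'`
annihilates the tangent vector `(1, φ' x) ≠ 0`, contradicting the injectivity of `f'`.
-/

theorem ContinuousLinearMap.apply_eq_fst_smul_add_snd_smul {M : Type*} [AddCommGroup M]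
    [Module ℝ M] [TopologicalSpace M] (L : ℝ × ℝ →L[ℝ] M) (v : ℝ × ℝ) :
    L v = v.1 • L (1, 0) + v.2 • L (0, 1) := by
  rw [← map_smul, ← map_smul, ← map_add]
  congr 1
  ext <;> simp

theorem ContinuousLinearMap.apply_pos_of_pos {L : ℝ × ℝ →L[ℝ] ℝ} (h₁ : 0 < L (1, 0))
    (h₂ : 0 < L (0, 1)) {v : ℝ × ℝ} (hv : 0 < v) : 0 < L v := by
  rw [L.apply_eq_fst_smul_add_snd_smul, smul_eq_mul, smul_eq_mul]
  rcases Prod.lt_iff.mp hv with ⟨hv₁, hv₂⟩ | ⟨hv₁, hv₂⟩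
  · exact add_pos_of_pos_of_nonneg (mul_pos hv₁ h₁) (mul_nonneg hv₂ h₂.le)
  · exact add_pos_of_nonneg_of_pos (mul_nonneg hv₁ h₁.le) (mul_pos hv₂ h₂)

theorem Convex.strictMonoOn_of_hasFDerivAt_pos {E : Type*} [NormedAddCommGroup E]
    [NormedSpace ℝ E] [PartialOrder E] [IsOrderedAddMonoid E] {f : E → ℝ} {f' : E → E →L[ℝ] ℝ}
    {s : Set E} (hs : Convex ℝ s) (hf : ∀ x ∈ s, HasFDerivAt f (f' x) x)
    (hf' : ∀ x ∈ s, ∀ v, 0 < v → 0 < f' x v) : StrictMonoOn f s := by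
  intro p hp q hq hpq
  have hseg : ∀ θ ∈ Icc (0 : ℝ) 1, AffineMap.lineMap p q θ ∈ s :=
    fun θ hθ => hs.lineMap_mem hp hq hθ
  have hderiv : ∀ θ ∈ Icc (0 : ℝ) 1, HasDerivAt (fun θ => f (AffineMap.lineMap p q θ))
      (f' (AffineMap.lineMap p q θ) (q - p)) θ :=
    fun θ hθ => (hf _ (hseg θ hθ)).comp_hasDerivAt θ AffineMap.hasDerivAt_lineMap
  obtain ⟨θ, hθ, hslope⟩ := exists_hasDerivAt_eq_slope _ _ zero_lt_one
    (fun θ hθ => (hderiv θ hθ).continuousAt.continuousWithinAt)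
    (fun θ hθ => hderiv θ (Ioo_subset_Icc_self hθ))
  simpa only [hslope, AffineMap.lineMap_apply_one, AffineMap.lineMap_apply_zero, sub_zero,
    div_one, sub_pos] using hf' _ (hseg θ (Ioo_subset_Icc_self hθ)) _ (sub_pos.mpr hpq)

theorem Prod.lt_and_lt_or_lt_and_lt_of_not_le {α β : Type*} [LinearOrder α] [LinearOrder β]
    {s t : α × β} (hst : ¬s ≤ t) (hts : ¬t ≤ s) :
    (s.1 < t.1 ∧ t.2 < s.2) ∨ (t.1 < s.1 ∧ s.2 < t.2) := by
  simp only [Prod.le_def, not_and_or, not_le] at hst hts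
  rcases hst with h₁ | h₂ <;> rcases hts with h₃ | h₄
  · exact absurd h₁ h₃.asymm
  · exact Or.inr ⟨h₁, h₄⟩
  · exact Or.inl ⟨h₃, h₂⟩
  · exact absurd h₂ h₄.asymm

theorem IsCompact.continuousOn_of_unique_apply_eq {X Y Z : Type*} [TopologicalSpace X]
    [TopologicalSpace Y] [TopologicalSpace Z] [T2Space Z] {F : X × Y → Z} {φ : X → Y}
    {s : Set X} {K : Set Y} {c : Z}
    (hK : IsCompact K) (hF : ContinuousOn F (s ×ˢ K))
    (hφ : ∀ x ∈ s, φ x ∈ K ∧ F (x, φ x) = c)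
    (huniq : ∀ x ∈ s, ∀ y ∈ K, F (x, y) = c → y = φ x) : ContinuousOn φ s := by
  intro x₀ hx₀
  refine hK.tendsto_nhds_of_unique_mapClusterPt
    (eventually_nhdsWithin_of_forall fun x hx => (hφ x hx).1) fun y hy hcluster => ?_
  refine huniq x₀ hx₀ y hy ?_
  obtain ⟨U, hU, hUy⟩ := mapClusterPt_iff_ultrafilter.mp hcluster
  have hUs : ∀ᶠ x in (U : Filter X), x ∈ s := hU self_mem_nhdsWithin
  have hgraph : Tendsto (fun x => (x, φ x)) U (𝓝[s ×ˢ K] (x₀, y)) :=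
    tendsto_nhdsWithin_iff.mpr ⟨((tendsto_nhdsWithin_iff.mp hU).1).prodMk_nhds hUy,
      hUs.mono fun x hx => ⟨hx, (hφ x hx).1⟩⟩
  refine tendsto_nhds_unique ((hF _ ⟨hx₀, hy⟩).tendsto.comp hgraph) ?_
  exact tendsto_const_nhds.congr' (hUs.mono fun x hx => (hφ x hx).2.symm)

theorem HasFDerivAt.hasDerivAt_of_eventually_apply_eq {F : ℝ × ℝ → ℝ} {L : ℝ × ℝ →L[ℝ] ℝ}
    {φ : ℝ → ℝ} {x₀ : ℝ} (hF : HasFDerivAt F L (x₀, φ x₀)) (hL : L (0, 1) ≠ 0)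
    (hφ : ContinuousAt φ x₀)
    (hlevel : ∀ᶠ x in 𝓝 x₀, F (x, φ x) = F (x₀, φ x₀)) :
    HasDerivAt φ (-(L (1, 0) / L (0, 1))) x₀ := by
  have hgraph : Tendsto (fun x => (x, φ x)) (𝓝 x₀) (𝓝 (x₀, φ x₀)) :=
    (continuousAt_id.prodMk hφ).tendsto
  have hlin : (fun x => (x - x₀) * L (1, 0) + (φ x - φ x₀) * L (0, 1)) =o[𝓝 x₀]
      fun x => (x - x₀, φ x - φ x₀) := by
    refine (hF.isLittleO.comp_tendsto hgraph).neg_left.congr' (hlevel.mono fun x hx => ?_)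
      EventuallyEq.rfl
    dsimp only [Function.comp_apply]
    rw [hx, sub_self, zero_sub, neg_neg, Prod.mk_sub_mk,
      L.apply_eq_fst_smul_add_snd_smul, smul_eq_mul, smul_eq_mul]
  generalize L (1, 0) = a at hlin ⊢
  generalize L (0, 1) = b at hL hlin ⊢
  have hbigO : (fun x => (x - x₀, φ x - φ x₀)) =O[𝓝 x₀] fun x => x - x₀ := by
    have hsmall : (fun x => ((0 : ℝ), b⁻¹ * ((x - x₀) * a + (φ x - φ x₀) * b)))
        =o[𝓝 x₀] fun x => (x - x₀, φ x - φ x₀) :=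
      (isLittleO_zero _ _).prod_left (hlin.const_mul_left _)
    -- `hlin` fixes `φ x - φ x₀` in terms of `x - x₀` up to an error small against the increment
    refine hsmall.right_isBigO_sub.trans ?_
    have : (fun x => (x - x₀, φ x - φ x₀) -
          ((0 : ℝ), b⁻¹ * ((x - x₀) * a + (φ x - φ x₀) * b))) =
        fun x => (x - x₀, -(a / b) * (x - x₀)) := by
      funext x
      simp only [Prod.mk_sub_mk, sub_zero, Prod.mk.injEq, true_and]
      field_simp
      ring
    rw [this]
    exact (isBigO_refl _ _).prod_left ((isBigO_refl _ _).const_mul_left _)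
  rw [hasDerivAt_iff_isLittleO]
  refine ((hlin.trans_isBigO hbigO).const_mul_left b⁻¹).congr_left fun x => ?_
  simp only [smul_eq_mul]
  field_simp
  ring

theorem exists_continuousOn_level_curve {F : ℝ × ℝ → ℝ} {x₁ x₂ y₁ y₂ : ℝ} (hx : x₁ ≤ x₂)
    (hy : y₁ ≤ y₂) (hF : ContinuousOn F (Icc x₁ x₂ ×ˢ Icc y₁ y₂))
    (hmono : StrictMonoOn F (Icc x₁ x₂ ×ˢ Icc y₁ y₂)) (hcorner : F (x₁, y₂) = F (x₂, y₁)) :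
    ∃ φ : ℝ → ℝ, ContinuousOn φ (Icc x₁ x₂) ∧ φ x₁ = y₂ ∧ φ x₂ = y₁ ∧
      ∀ x ∈ Icc x₁ x₂, φ x ∈ Icc y₁ y₂ ∧ F (x, φ x) = F (x₁, y₂) := by
  have hR : ∀ x ∈ Icc x₁ x₂, ∀ y ∈ Icc y₁ y₂, (x, y) ∈ Icc x₁ x₂ ×ˢ Icc y₁ y₂ :=
    fun x hx y hy => mk_mem_prod hx hy
  have hexists : ∀ x ∈ Icc x₁ x₂, ∃ y ∈ Icc y₁ y₂, F (x, y) = F (x₁, y₂) := by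
    intro x hxI
    have hlow : F (x, y₁) ≤ F (x₁, y₂) := hcorner ▸
      hmono.monotoneOn (hR x hxI y₁ ⟨le_rfl, hy⟩) (hR x₂ ⟨hx, le_rfl⟩ y₁ ⟨le_rfl, hy⟩)
        (Prod.mk_le_mk.mpr ⟨hxI.2, le_rfl⟩)
    have hhigh : F (x₁, y₂) ≤ F (x, y₂) :=
      hmono.monotoneOn (hR x₁ ⟨le_rfl, hx⟩ y₂ ⟨hy, le_rfl⟩) (hR x hxI y₂ ⟨hy, le_rfl⟩)
        (Prod.mk_le_mk.mpr ⟨hxI.1, le_rfl⟩)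
    exact intermediate_value_Icc hy
      (hF.comp (Continuous.prodMk_right x).continuousOn (hR x hxI)) ⟨hlow, hhigh⟩
  choose! φ hφ hφF using hexists
  have huniq : ∀ x ∈ Icc x₁ x₂, ∀ y ∈ Icc y₁ y₂, F (x, y) = F (x₁, y₂) → y = φ x :=
    fun x hxI y hyI h =>
      have hfibre : StrictMonoOn (fun y => F (x, y)) (Icc y₁ y₂) := fun _ ha _ hb hab =>
        hmono (hR x hxI _ ha) (hR x hxI _ hb) (Prod.mk_lt_mk_iff_right.mpr hab)
      hfibre.injOn hyI (hφ x hxI) (h.trans (hφF x hxI).symm)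
  refine ⟨φ, isCompact_Icc.continuousOn_of_unique_apply_eq hF (fun x hx => ⟨hφ x hx, hφF x hx⟩)
    huniq, (huniq x₁ ⟨le_rfl, hx⟩ y₂ ⟨hy, le_rfl⟩ rfl).symm,
    (huniq x₂ ⟨hx, le_rfl⟩ y₁ ⟨le_rfl, hy⟩ hcorner.symm).symm, fun x hx => ⟨hφ x hx, hφF x hx⟩⟩

theorem apply_ne_apply_of_lt_of_lt {f : ℝ × ℝ → ℝ × ℝ} {f' : ℝ × ℝ → ℝ × ℝ →L[ℝ] ℝ × ℝ}
    {x₁ x₂ y₁ y₂ : ℝ} (hx : x₁ < x₂) (hy : y₁ < y₂)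
    (hf : ∀ z ∈ Icc x₁ x₂ ×ˢ Icc y₁ y₂, HasFDerivAt f (f' z) z)
    (hf' : ∀ z ∈ Icc x₁ x₂ ×ˢ Icc y₁ y₂, Function.Injective (f' z))
    (hmono : StrictMonoOn (fun z => (f z).1) (Icc x₁ x₂ ×ˢ Icc y₁ y₂))
    (hf'₂ : ∀ z ∈ Icc x₁ x₂ ×ˢ Icc y₁ y₂, (f' z (0, 1)).1 ≠ 0) :
    f (x₁, y₂) ≠ f (x₂, y₁) := by
  intro heq
  have hR : ∀ x ∈ Icc x₁ x₂, ∀ y ∈ Icc y₁ y₂, (x, y) ∈ Icc x₁ x₂ ×ˢ Icc y₁ y₂ :=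
    fun x hx y hy => mk_mem_prod hx hy
  have hcont : ContinuousOn f (Icc x₁ x₂ ×ˢ Icc y₁ y₂) :=
    fun z hz => (hf z hz).continuousAt.continuousWithinAt
  obtain ⟨φ, hφcont, hφ₁, hφ₂, hφ⟩ := exists_continuousOn_level_curve hx.le hy.le
    (continuous_fst.comp_continuousOn hcont) hmono (congrArg Prod.fst heq)
  have hlevel : ∀ x ∈ Ioo x₁ x₂, ∀ᶠ x' in 𝓝 x, (f (x', φ x')).1 = (f (x, φ x)).1 :=
    fun x hx => eventually_of_mem (Icc_mem_nhds hx.1 hx.2) fun x' hx' =>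
      (hφ x' hx').2.trans (hφ x (Ioo_subset_Icc_self hx)).2.symm
  have hgraph : ∀ x ∈ Ioo x₁ x₂,
      HasDerivAt (fun x => f (x, φ x)) (f' (x, φ x) (1, deriv φ x)) x := by
    intro x hx
    have hz := hR x (Ioo_subset_Icc_self hx) _ (hφ x (Ioo_subset_Icc_self hx)).1
    have hφx : HasDerivAt φ (deriv φ x) x :=
      ((hf _ hz).fst.hasDerivAt_of_eventually_apply_eq (hf'₂ _ hz)
        (hφcont.continuousAt (Icc_mem_nhds hx.1 hx.2)) (hlevel x hx)).differentiableAt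
        |>.hasDerivAt
    exact (hf _ hz).comp_hasDerivAt x ((hasDerivAt_id x).prodMk hφx)
  obtain ⟨c, hc, hc₂⟩ := exists_hasDerivAt_eq_zero hx
    (continuous_snd.comp_continuousOn <| hcont.comp (continuousOn_id.prodMk hφcont)
      fun x hx => hR x hx _ (hφ x hx).1)
    (by simp only [Function.comp_apply, id_eq, hφ₁, hφ₂, heq])
    fun x hx => hasFDerivAt_snd.comp_hasDerivAt x (hgraph x hx)
  have hc₁ : (f' (c, φ c) (1, deriv φ c)).1 = 0 :=
    (hasFDerivAt_fst.comp_hasDerivAt c (hgraph c hc)).unique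
      ((hasDerivAt_const c _).congr_of_eventuallyEq (hlevel c hc))
  have hzero : f' (c, φ c) (1, deriv φ c) = f' (c, φ c) 0 := by
    rw [map_zero]
    exact Prod.ext hc₁ hc₂
  exact one_ne_zero (congrArg Prod.fst
    (hf' _ (hR c (Ioo_subset_Icc_self hc) _ (hφ c (Ioo_subset_Icc_self hc)).1) hzero))

theorem injOn_Icc_of_hasFDerivAt {f : ℝ × ℝ → ℝ × ℝ} {f' : ℝ × ℝ → ℝ × ℝ →L[ℝ] ℝ × ℝ}
    {a b : ℝ × ℝ} (hf : ∀ z ∈ Icc a b, HasFDerivAt f (f' z) z)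
    (hf' : ∀ z ∈ Icc a b, Function.Injective (f' z))
    (hpos : ∀ z ∈ Icc a b, 0 < (f' z (1, 0)).1 ∧ 0 < (f' z (0, 1)).1) :
    InjOn f (Icc a b) := by
  have hmono : StrictMonoOn (fun z => (f z).1) (Icc a b) :=
    (convex_Icc a b).strictMonoOn_of_hasFDerivAt_pos (fun z hz => (hf z hz).fst)
      fun z hz _ hv => ContinuousLinearMap.apply_pos_of_pos (hpos z hz).1 (hpos z hz).2 hv
  have hantidiag : ∀ p ∈ Icc a b, ∀ q ∈ Icc a b, p.1 < q.1 → q.2 < p.2 → f p ≠ f q := by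
    intro p hp q hq h₁ h₂
    have hsub : Icc p.1 q.1 ×ˢ Icc q.2 p.2 ⊆ Icc a b := by
      rw [Icc_prod_Icc]
      exact Icc_subset_Icc ⟨hp.1.1, hq.1.2⟩ ⟨hq.2.1, hp.2.2⟩
    exact apply_ne_apply_of_lt_of_lt h₁ h₂ (fun z hz => hf z (hsub hz))
      (fun z hz => hf' z (hsub hz)) (hmono.mono hsub) fun z hz => (hpos z (hsub hz)).2.ne'
  have hcomparable : ∀ {p q}, p ∈ Icc a b → q ∈ Icc a b → f p = f q → p ≤ q → p = q :=
    fun hp hq hpq hle => hle.eq_or_lt.resolve_right fun hlt =>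
      (hmono hp hq hlt).ne (congrArg Prod.fst hpq)
  intro s hs t ht hst
  by_contra hne
  rcases Prod.lt_and_lt_or_lt_and_lt_of_not_le (fun h => hne (hcomparable hs ht hst h))
    (fun h => hne (hcomparable ht hs hst.symm h).symm) with ⟨h₁, h₂⟩ | ⟨h₁, h₂⟩
  · exact hantidiag s hs t ht h₁ h₂ hst
  · exact hantidiag t ht s hs h₁ h₂ hst.symm

theorem stmt10_general
    (Pi0 : ℝ × ℝ → ℝ × ℝ) (J : ℝ × ℝ → (ℝ × ℝ) →L[ℝ] (ℝ × ℝ))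
    (a b : ℝ × ℝ)
    (hderiv : ∀ t ∈ Icc a b, HasFDerivAt Pi0 (J t) t)
    (hfullrank : ∀ t ∈ Icc a b, Function.Bijective (J t))
    (hpos : ∀ t ∈ Icc a b,
      0 < (J t (1, 0)).1 ∧ 0 < (J t (1, 0)).2 ∧
      0 < (J t (0, 1)).1 ∧ 0 < (J t (0, 1)).2) :
    ∀ s ∈ Icc a b, ∀ t ∈ Icc a b, Pi0 s = 0 → Pi0 t = 0 → s = t :=
  fun _ hs _ ht hs0 ht0 =>
    injOn_Icc_of_hasFDerivAt hderiv (fun t ht => (hfullrank t ht).injective)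
      (fun t ht => ⟨(hpos t ht).1, (hpos t ht).2.2.1⟩) hs ht (hs0.trans ht0.symm)

/-- If `Pi0 : ℝ² → ℝ²` is continuously differentiable on a compact rectangle
`ℒ = Icc a b`, with Jacobian `J` continuous, of full rank and with strictly positive
entries everywhere on `ℒ`, then `Pi0(t) = 0` has at most one solution in `ℒ`. -/
theorem stmt10
    (Pi0 : ℝ × ℝ → ℝ × ℝ) (J : ℝ × ℝ → (ℝ × ℝ) →L[ℝ] (ℝ × ℝ))
    (a b : ℝ × ℝ) (hab : a ≤ b)
    (hderiv : ∀ t ∈ Icc a b, HasFDerivAt Pi0 (J t) t)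
    (hJcont : ContinuousOn J (Icc a b))
    (hfullrank : ∀ t ∈ Icc a b, Function.Bijective (J t))
    (hpos : ∀ t ∈ Icc a b,
      0 < (J t (1, 0)).1 ∧ 0 < (J t (1, 0)).2 ∧
      0 < (J t (0, 1)).1 ∧ 0 < (J t (0, 1)).2) :
    ∀ s ∈ Icc a b, ∀ t ∈ Icc a b, Pi0 s = 0 → Pi0 t = 0 → s = t :=
  stmt10_general Pi0 J a b hderiv hfullrank hpos
end

section
/- Let aₙ ≥ 0 be a sequence of random variables satisfying M aₙ² ≤ Cₙ aₙ + rₙ(n⁻¹ + aₙ² + aₙ n^{-1/2}) with M > 0 constant, Cₙ = O_p(n^{-1/2}) and rₙ = o_p(1). Then aₙ = O_p(n^{-1/2}). -/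
open MeasureTheory

/-- `X n = O_p(r n)`: stochastic boundedness at rate `r`. -/
def IsBigOp {Ω : Type*} [MeasurableSpace Ω] (μ : Measure Ω)
    (X : ℕ → Ω → ℝ) (r : ℕ → ℝ) : Prop :=
  ∀ ε > 0, ∃ M > 0, ∃ N : ℕ, ∀ n ≥ N,
    μ {ω | M * r n < |X n ω|} ≤ ENNReal.ofReal ε

/-- `X n = o_p(r n)`: convergence to zero in probability at rate `r`. -/
def IsLittleOp {Ω : Type*} [MeasurableSpace Ω] (μ : Measure Ω)
    (X : ℕ → Ω → ℝ) (r : ℕ → ℝ) : Prop :=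
  ∀ δ > 0, ∀ ε > 0, ∃ N : ℕ, ∀ n ≥ N,
    μ {ω | δ * r n < |X n ω|} ≤ ENNReal.ofReal ε

/-- self-bounding rate argument. If `aₙ ≥ 0` satisfies
`M aₙ² ≤ Cₙ aₙ + rₙ (n⁻¹ + aₙ² + aₙ n^{-1/2})` with `M > 0`, `Cₙ = O_p(n^{-1/2})`
and `rₙ = o_p(1)`, then `aₙ = O_p(n^{-1/2})`. -/
theorem stmt16
    {Ω : Type*} [MeasurableSpace Ω] (μ : Measure Ω) [IsProbabilityMeasure μ]
    (a C r : ℕ → Ω → ℝ) (M : ℝ) (hM : 0 < M)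
    (ha_nonneg : ∀ n ω, 0 ≤ a n ω)
    (hineq : ∀ n : ℕ, 0 < n → ∀ ω,
      M * (a n ω) ^ 2 ≤ C n ω * a n ω +
        r n ω * (((n : ℝ))⁻¹ + (a n ω) ^ 2 + a n ω * ((n : ℝ)) ^ (-(1:ℝ)/2)))
    (hC : IsBigOp μ C (fun n => ((n : ℝ)) ^ (-(1:ℝ)/2)))
    (hr : IsLittleOp μ r (fun _ => (1:ℝ))) :
    IsBigOp μ a (fun n => ((n : ℝ)) ^ (-(1:ℝ)/2)) := by
  intro ε hε
  obtain ⟨K, hK, N₁, hN₁⟩ := hC (ε/2) (by positivity)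
  obtain ⟨N₂, hN₂⟩ := hr (M/2) (by positivity) (ε/2) (by positivity)
  refine ⟨2*K/M + 3, by positivity, max (max N₁ N₂) 1, fun n hn => ?_⟩
  have hn1 : 1 ≤ n := le_trans (le_max_right _ _) hn
  have hnN₁ : N₁ ≤ n := le_trans (le_trans (le_max_left _ _) (le_max_left _ _)) hn
  have hnN₂ : N₂ ≤ n := le_trans (le_trans (le_max_right _ _) (le_max_left _ _)) hn
  have hnpos : (0:ℝ) < n := by exact_mod_cast hn1
  set s : ℝ := (n : ℝ) ^ (-(1:ℝ)/2) with hs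
  have hspos : 0 < s := Real.rpow_pos_of_pos hnpos _
  have hs2 : (n:ℝ)⁻¹ = s ^ 2 := by
    rw [hs, ← Real.rpow_natCast ((n:ℝ) ^ (-(1:ℝ)/2)) 2, ← Real.rpow_mul hnpos.le]
    norm_num
    exact (Real.rpow_neg_one _).symm
  have hsub : {ω | (2*K/M + 3) * s < |a n ω|} ⊆
      {ω | K * s < |C n ω|} ∪ {ω | (M/2) * 1 < |r n ω|} := by
    intro ω hω
    simp only [Set.mem_setOf_eq] at hω
    by_contra hcon
    simp only [Set.mem_union, Set.mem_setOf_eq, not_or, not_lt, mul_one] at hcon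
    obtain ⟨hCb, hrb⟩ := hcon
    have hapos : 0 ≤ a n ω := ha_nonneg n ω
    rw [abs_of_nonneg hapos] at hω
    have hi := hineq n (by omega) ω
    rw [hs2, ← hs] at hi
    have hX : 0 ≤ s ^ 2 + (a n ω) ^ 2 + a n ω * s := by positivity
    have h1 : C n ω * a n ω ≤ K * s * a n ω := by
      have := mul_le_mul_of_nonneg_right hCb hapos
      nlinarith [le_abs_self (C n ω), mul_le_mul_of_nonneg_right (le_abs_self (C n ω)) hapos]
    have h2 : r n ω * (s^2 + (a n ω)^2 + a n ω * s) ≤ (M/2) * (s^2 + (a n ω)^2 + a n ω * s) := by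
      have := mul_le_mul_of_nonneg_right (le_trans (le_abs_self (r n ω)) hrb) hX
      linarith
    have key : (2*K + 3*M) * s < M * a n ω := by
      have h := mul_lt_mul_of_pos_left hω hM
      have heq : M * ((2*K/M + 3) * s) = (2*K + 3*M) * s := by
        field_simp
      rw [heq] at h; linarith
    have hapos' : 0 < a n ω := lt_of_le_of_lt (by positivity) hω
    nlinarith [mul_lt_mul_of_pos_right key hapos', mul_pos hM hspos,
      mul_pos (mul_pos hM hspos) hspos, mul_pos hspos hapos',
      mul_pos (mul_pos hM hspos) hapos']
  calc μ {ω | (2*K/M + 3) * s < |a n ω|}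
      ≤ μ ({ω | K * s < |C n ω|} ∪ {ω | (M/2) * 1 < |r n ω|}) := measure_mono hsub
    _ ≤ μ {ω | K * s < |C n ω|} + μ {ω | (M/2) * 1 < |r n ω|} := measure_union_le _ _
    _ ≤ ENNReal.ofReal (ε/2) + ENNReal.ofReal (ε/2) := add_le_add (hN₁ n hnN₁) (hN₂ n hnN₂)
    _ = ENNReal.ofReal ε := by
        rw [← ENNReal.ofReal_add (by positivity) (by positivity)]; norm_num
end
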